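/- In the Birkhoff decomposition of a character φ of a graded connected commutative bialgebra H with values in a commutative Rota–Baxter algebra (A, P) (P idempotent Rota–Baxter operator of weight −1 with image and kernel subalgebras), the map φ_- defined recursively by φ_-(1)=1 and φ_-(x) = −P(φ(x) + ∑_{(x)} φ_-(x')φ(x'')) for x of positive degree is itself an algebra morphism (character) from H to A. -/

import Mathlib

/- STATEMENT 6: In the Birkhoff decomposition of a character `φ` of a graded connected
commutative bialgebra `H` with values in a commutative Rota–Baxter algebra `(A, P)`
(with `P` an idempotent Rota–Baxter operator of weight −1 whose image and kernel are
subalgebras), the recursively defined map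
`φ₋(1) = 1`, `φ₋(x) = −P(φ(x) + ∑ φ₋(x')φ(x'')) = −P((φ₋*φ)(x) − φ₋(x))` for `x` of
positive degree, is itself a character. -/

variable {R H A : Type*} [Field R] [CommRing H] [Bialgebra R H]
  [CommRing A] [Algebra R A]

noncomputable def conv (f g : H →ₗ[R] A) : H →ₗ[R] A :=
  (LinearMap.mul' R A).comp ((TensorProduct.map f g).comp
    (Coalgebra.comul : H →ₗ[R] TensorProduct R H H))

def IsCharacter (f : H →ₗ[R] A) : Prop :=
  f 1 = 1 ∧ ∀ x y : H, f (x * y) = f x * f y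

def Connected (ℬ : ℕ → Submodule R H) : Prop :=
  ℬ 0 ≤ Submodule.span R {(1 : H)}

def ComulGraded (ℬ : ℕ → Submodule R H) : Prop :=
  ∀ n : ℕ, ∀ x ∈ ℬ n, (Coalgebra.comul (R := R) x : TensorProduct R H H) ∈
    ⨆ (p : ℕ × ℕ) (_ : p.1 + p.2 = n),
      LinearMap.range (TensorProduct.map (ℬ p.1).subtype (ℬ p.2).subtype)

/-!
Write `φ̄ = φ₋ ⋆ φ - φ₋` (Bogoliubov's preparation map), so that `φ₋ = -P ∘ φ̄` in positive
degree. For homogeneous `x` of degree `m`, connectedness and the counit axiom give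
`Δx = x ⊗ 1 + Δ'x` with `Δ'x` of left degree `< m`. Expanding `Δ(xy) = Δx Δy` and using, by
induction on the total degree, that `φ₋` is multiplicative in lower degrees, one gets
`φ̄(xy) = φ₋(x) φ̄(y) + φ̄(x) φ₋(y) + φ̄(x) φ̄(y)`.
The Rota–Baxter identity rewrites `φ₋(x) φ₋(y) = (-P φ̄(x)) (-P φ̄(y))` as `-P` of exactly this
expression, which is `φ₋(xy)`.
-/

open TensorProduct Set Submodule

noncomputable def convTensor (f g : H →ₗ[R] A) : H ⊗[R] H →ₗ[R] A :=
  LinearMap.mul' R A ∘ₗ TensorProduct.map f g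

@[simp]
lemma convTensor_tmul (f g : H →ₗ[R] A) (u v : H) : convTensor f g (u ⊗ₜ v) = f u * g v := by
  simp [convTensor]

lemma conv_apply (f g : H →ₗ[R] A) (x : H) :
    conv f g x = convTensor f g (Coalgebra.comul x) := rfl

lemma convTensor_mul {f g : H →ₗ[R] A} (hg : ∀ v v', g (v * v') = g v * g v')
    {S T : Set H} (hST : ∀ u ∈ S, ∀ u' ∈ T, f (u * u') = f u * f u') {a b : H ⊗[R] H}
    (ha : a ∈ span R (image2 (· ⊗ₜ[R] ·) S univ))
    (hb : b ∈ span R (image2 (· ⊗ₜ[R] ·) T univ)) :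
    convTensor f g (a * b) = convTensor f g a * convTensor f g b := by
  let D : H ⊗[R] H →ₗ[R] H ⊗[R] H →ₗ[R] A :=
    (LinearMap.mul R (H ⊗[R] H)).compr₂ (convTensor f g) -
      (LinearMap.mul R A).compl₁₂ (convTensor f g) (convTensor f g)
  have hD : map₂ D (span R (image2 (· ⊗ₜ[R] ·) S univ))
      (span R (image2 (· ⊗ₜ[R] ·) T univ)) ≤ ⊥ := by
    rw [map₂_span_span, span_le]
    rintro _ ⟨_, ⟨u, hu, v, -, rfl⟩, _, ⟨u', hu', v', -, rfl⟩, rfl⟩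
    simp [D, Algebra.TensorProduct.tmul_mul_tmul, hST u hu u' hu', hg, mul_mul_mul_comm]
  exact sub_eq_zero.1 ((mem_bot R).1 (hD (apply_mem_map₂ D ha hb)))

variable (ℬ : ℕ → Submodule R H)

def homogeneousBelow (m : ℕ) : Set H := {u | ∃ p < m, u ∈ ℬ p}

def leftDegreeBelow (m : ℕ) : Submodule R (H ⊗[R] H) :=
  span R (image2 (· ⊗ₜ[R] ·) (homogeneousBelow ℬ m) univ)

variable {ℬ}

lemma mem_homogeneousBelow {u : H} {p m : ℕ} (hu : u ∈ ℬ p) (hpm : p < m) :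
    u ∈ homogeneousBelow ℬ m :=
  ⟨p, hpm, hu⟩

lemma exists_comul_sub_tmul_one_mem (hconn : Connected ℬ) (hgr : ComulGraded ℬ) {m : ℕ} {x : H}
    (hx : x ∈ ℬ m) : ∃ a ∈ ℬ m, Coalgebra.comul x - a ⊗ₜ[R] 1 ∈ leftDegreeBelow ℬ m := by
  have hle : (⨆ (p : ℕ × ℕ) (_ : p.1 + p.2 = m),
      LinearMap.range (TensorProduct.map (ℬ p.1).subtype (ℬ p.2).subtype)) ≤
      (ℬ m).map ((TensorProduct.mk R H H).flip 1) ⊔ leftDegreeBelow ℬ m := by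
    refine iSup₂_le fun ⟨p, q⟩ hpq => ?_
    rw [range_map_eq_span_tmul, span_le]
    rintro _ ⟨u, v, rfl⟩
    rcases (show p ≤ m by omega).lt_or_eq with hlt | rfl
    · exact mem_sup_right (subset_span ⟨u, mem_homogeneousBelow u.2 hlt, v, trivial, rfl⟩)
    · obtain rfl : q = 0 := by omega
      obtain ⟨r, hr⟩ := mem_span_singleton.1 (hconn v.2)
      exact mem_sup_left ⟨r • u, smul_mem _ r u.2, by simp [← hr]⟩
  obtain ⟨_, ⟨a, ha, rfl⟩, z, hz, hsum⟩ := mem_sup.1 (hle (hgr m x hx))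
  exact ⟨a, ha, by simpa [← hsum]⟩

lemma comul_sub_tmul_one_mem [GradedAlgebra ℬ] (hconn : Connected ℬ) (hgr : ComulGraded ℬ)
    {m : ℕ} {x : H} (hx : x ∈ ℬ m) :
    Coalgebra.comul x - x ⊗ₜ[R] 1 ∈ leftDegreeBelow ℬ m := by
  obtain ⟨a, ha, hxa⟩ := exists_comul_sub_tmul_one_mem hconn hgr hx
  let G : H ⊗[R] H →ₗ[R] H := GradedAlgebra.proj ℬ m ∘ₗ (TensorProduct.rid R H).toLinearMap ∘ₗ
    (Coalgebra.counit (R := R) (A := H)).lTensor H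
  have hG : leftDegreeBelow ℬ m ≤ LinearMap.ker G := by
    refine span_le.2 ?_
    rintro _ ⟨u, ⟨p, hp, hu⟩, v, -, rfl⟩
    simp [G, DirectSum.decompose_of_mem_ne ℬ hu hp.ne]
  have hGx : G (Coalgebra.comul x - a ⊗ₜ[R] 1) = x - a := by
    simp [G, Coalgebra.lTensor_counit_comul, DirectSum.decompose_of_mem_same ℬ hx,
      DirectSum.decompose_of_mem_same ℬ ha]
  obtain rfl : x = a := sub_eq_zero.1 (hGx ▸ hG hxa)
  exact hxa

lemma conv_sub_self_apply_mul [GradedAlgebra ℬ] (hconn : Connected ℬ) (hgr : ComulGraded ℬ)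
    {f g : H →ₗ[R] A} (hg : IsCharacter g) {m n : ℕ}
    (hf : ∀ p q, p + q < m + n → ∀ u ∈ ℬ p, ∀ v ∈ ℬ q, f (u * v) = f u * f v)
    {x y : H} (hx : x ∈ ℬ m) (hy : y ∈ ℬ n) :
    conv f g (x * y) - f (x * y) = f x * (conv f g y - f y) + (conv f g x - f x) * f y +
      (conv f g x - f x) * (conv f g y - f y) := by
  have hf' : ∀ a b, a + b ≤ m + n + 1 → ∀ u ∈ homogeneousBelow ℬ a,
      ∀ v ∈ homogeneousBelow ℬ b, f (u * v) = f u * f v := by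
    rintro a b hab u ⟨p, hp, hu⟩ v ⟨q, hq, hv⟩
    exact hf p q (by omega) u hu v hv
  have hx1 : x ⊗ₜ[R] (1 : H) ∈ leftDegreeBelow ℬ (m + 1) :=
    subset_span ⟨x, mem_homogeneousBelow hx m.lt_succ_self, 1, trivial, rfl⟩
  have hy1 : y ⊗ₜ[R] (1 : H) ∈ leftDegreeBelow ℬ (n + 1) :=
    subset_span ⟨y, mem_homogeneousBelow hy n.lt_succ_self, 1, trivial, rfl⟩
  set F := convTensor f g
  have hF1 : ∀ z : H, F (z ⊗ₜ 1) = f z := by simp [F, hg.1]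
  set Rx := Coalgebra.comul x - x ⊗ₜ[R] (1 : H)
  set Ry := Coalgebra.comul y - y ⊗ₜ[R] (1 : H)
  have hFRx : F Rx = conv f g x - f x := by rw [map_sub, hF1]; rfl
  have hFRy : F Ry = conv f g y - f y := by rw [map_sub, hF1]; rfl
  have hRx := comul_sub_tmul_one_mem hconn hgr hx
  have hRy := comul_sub_tmul_one_mem hconn hgr hy
  have hΔ : Coalgebra.comul (R := R) (x * y) = (x ⊗ₜ 1 + Rx) * (y ⊗ₜ 1 + Ry) := by
    simp [Rx, Ry, Bialgebra.comul_mul]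
  rw [conv_apply, hΔ, mul_add, add_mul, add_mul, map_add, map_add, map_add,
    Algebra.TensorProduct.tmul_mul_tmul, one_mul, hF1,
    convTensor_mul hg.2 (hf' _ _ (by omega)) hx1 hRy,
    convTensor_mul hg.2 (hf' _ _ (by omega)) hRx hy1,
    convTensor_mul hg.2 (hf' _ _ (by omega)) hRx hRy, hF1, hF1, hFRx, hFRy]
  ring

lemma neg_map_mul_neg_map {P : A →ₗ[R] A}
    (hRB : ∀ a b : A, P a * P b = P (P a * b + a * P b - a * b)) (a b : A) :
    -P a * -P b = -P (-P a * b + a * -P b + a * b) := by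
  rw [neg_mul_neg, hRB, ← map_neg]
  congr 1
  ring

lemma map_mul_of_mem_zero (hconn : Connected ℬ) {f : H →ₗ[R] A} (hf1 : f 1 = 1) {x : H}
    (hx : x ∈ ℬ 0) (y : H) : f (x * y) = f x * f y := by
  obtain ⟨r, rfl⟩ := mem_span_singleton.1 (hconn hx)
  simp [hf1]

lemma counterterm_map_mul_of_mem [GradedAlgebra ℬ] (hconn : Connected ℬ) (hgr : ComulGraded ℬ)
    {P : A →ₗ[R] A} (hRB : ∀ a b : A, P a * P b = P (P a * b + a * P b - a * b))
    {φ φm : H →ₗ[R] A} (hφ : IsCharacter φ) (hφm1 : φm 1 = 1)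
    (hrec : ∀ n : ℕ, 0 < n → ∀ x ∈ ℬ n, φm x = -P (conv φm φ x - φm x))
    {m n : ℕ} {x y : H} (hx : x ∈ ℬ m) (hy : y ∈ ℬ n) :
    φm (x * y) = φm x * φm y := by
  induction hN : m + n using Nat.strong_induction_on generalizing m n x y with
  | _ N ih =>
  rcases m.eq_zero_or_pos with rfl | hm
  · exact map_mul_of_mem_zero hconn hφm1 hx y
  rcases n.eq_zero_or_pos with rfl | hn
  · rw [mul_comm, map_mul_of_mem_zero hconn hφm1 hy x, mul_comm]
  have hprep := conv_sub_self_apply_mul hconn hgr hφ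
    (fun p q hpq u hu v hv => ih (p + q) (hN ▸ hpq) hu hv rfl) hx hy
  rw [hrec _ (by omega) _ (SetLike.mul_mem_graded hx hy), hprep, hrec m hm x hx, hrec n hn y hy,
    neg_map_mul_neg_map hRB, ← hrec m hm x hx, ← hrec n hn y hy]

lemma map_mul_of_forall_mem [GradedAlgebra ℬ] {f : H →ₗ[R] A}
    (hf : ∀ m n, ∀ x ∈ ℬ m, ∀ y ∈ ℬ n, f (x * y) = f x * f y) (x y : H) :
    f (x * y) = f x * f y := by
  induction x using DirectSum.Decomposition.inductionOn ℬ with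
  | zero => simp
  | add x x' hx hx' => simp [add_mul, hx, hx']
  | homogeneous x =>
  induction y using DirectSum.Decomposition.inductionOn ℬ with
  | zero => simp
  | add y y' hy hy' => simp [mul_add, hy, hy']
  | homogeneous y => exact hf _ _ x x.2 y y.2

theorem counterterm_map_isCharacter_general
    (ℬ : ℕ → Submodule R H) [GradedAlgebra ℬ]
    (hconn : Connected ℬ) (hgr : ComulGraded ℬ)
    (P : A →ₗ[R] A)
    (hRB : ∀ a b : A, P a * P b = P (P a * b + a * P b - a * b))
    (φ φm : H →ₗ[R] A) (hφ : IsCharacter φ)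
    (hφm1 : φm 1 = 1)
    -- the recursive definition φ₋(x) = −P(φ(x) + ∑ φ₋(x')φ(x'')) on positive degrees
    (hrec : ∀ n : ℕ, 0 < n → ∀ x ∈ ℬ n,
      φm x = - P ((conv φm φ) x - φm x)) :
    IsCharacter φm :=
  ⟨hφm1, map_mul_of_forall_mem (ℬ := ℬ) fun _ _ _ hx _ hy =>
    counterterm_map_mul_of_mem hconn hgr hRB hφ hφm1 hrec hx hy⟩

theorem counterterm_map_isCharacter
    (ℬ : ℕ → Submodule R H) [GradedAlgebra ℬ]
    (hconn : Connected ℬ) (hgr : ComulGraded ℬ)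
    (P : A →ₗ[R] A)
    (hidem : P.comp P = P)
    (hRB : ∀ a b : A, P a * P b = P (P a * b + a * P b - a * b))
    (himage : ∀ a b : A, a ∈ LinearMap.range P → b ∈ LinearMap.range P →
      a * b ∈ LinearMap.range P)
    (hker : ∀ a b : A, a ∈ LinearMap.ker P → b ∈ LinearMap.ker P →
      a * b ∈ LinearMap.ker P)
    (hker1 : (1 : A) ∈ LinearMap.ker P)
    (φ φm : H →ₗ[R] A) (hφ : IsCharacter φ)
    (hφm1 : φm 1 = 1)
    -- the recursive definition φ₋(x) = −P(φ(x) + ∑ φ₋(x')φ(x'')) on positive degrees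
    (hrec : ∀ n : ℕ, 0 < n → ∀ x ∈ ℬ n,
      φm x = - P ((conv φm φ) x - φm x)) :
    IsCharacter φm :=
  counterterm_map_isCharacter_general ℬ hconn hgr P hRB φ φm hφ hφm1 hrec
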